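/- Let n ≥ 2 and let X₁, …, X_n be i.i.d. real random variables on a probability space with mean μ, variance σ² = E[(X₁−μ)²] > 0, and finite fourth central moment μ₄ = E[(X₁−μ)⁴] < ∞; let κ = μ₄/σ⁴ − 3, s² = (1/(n−1))∑(X_i − X̄)², and c* = (κ/n + (n+1)/(n−1))⁻¹. Then the relative efficiency of the MSE-best biased estimator over the sample variance satisfies E[(s² − σ²)²] / E[(c*·s² − σ²)²] = 1 + κ/n + 2/(n−1), and this quantity is strictly greater than 1. -/

import Mathlib

/-!
Write `Yᵢ = Xᵢ - μ`, so that `s² = (∑ Yᵢ² - (∑ Yᵢ)² / n) / (n - 1)`. Expanding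
`E[Y_a^c (Y_a + W)^m]` binomially, with `W` an independent partial sum, reduces the first two
moments of `s²` to `σ²` and `μ₄`: `E s² = σ²` and `Var s² = μ₄/n - (n-3)σ⁴/(n(n-1)) = σ⁴ a` with
`a = κ/n + 2/(n-1)`. For an unbiased `s²`, `E[(c s² - σ²)²] = c² Var s² + (c-1)² σ⁴`, which is
`σ⁴ a` at `c = 1` and `σ⁴ a / (1 + a)` at `c = c* = (1 + a)⁻¹`, so the ratio is `1 + a`.
Finally `a > 0` because `μ₄ - σ⁴ = Var Y₁² ≥ 0`, i.e. `κ ≥ -2`.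
-/

open MeasureTheory ProbabilityTheory Finset

section Moments

variable {Ω : Type*} [MeasurableSpace Ω] {P : Measure Ω}

lemma MeasureTheory.MemLp.integrable_pow_of_le [IsFiniteMeasure P] {f : Ω → ℝ} {p k : ℕ}
    (hf : MemLp f p P) (hk : k ≤ p) : Integrable (fun ω => f ω ^ k) P := by
  refine (hf.mono_exponent (by exact_mod_cast hk)).integrable_norm_pow'.mono'
    (hf.1.pow k) (ae_of_all _ fun ω => ?_)
  simp [norm_pow]

lemma MeasureTheory.MemLp.sq_of_four [IsFiniteMeasure P] {f : Ω → ℝ} (hf : MemLp f 4 P) :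
    MemLp (fun ω => f ω ^ 2) 2 P := by
  refine (memLp_two_iff_integrable_sq (f := fun ω => f ω ^ 2) (hf.1.pow 2)).2 ?_
  simpa only [← pow_mul] using hf.integrable_pow_of_le (p := 4) le_rfl

lemma integral_const_mul_sub_sq [IsProbabilityMeasure P] {Z : Ω → ℝ} (hZ : MemLp Z 2 P)
    {v : ℝ} (hv : ∫ ω, Z ω ∂P = v) (c : ℝ) :
    ∫ ω, (c * Z ω - v) ^ 2 ∂P = c ^ 2 * variance Z P + (c - 1) ^ 2 * v ^ 2 := by
  have hZ1 := hZ.integrable one_le_two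
  have hexp : ∀ ω, (c * Z ω - v) ^ 2 = c ^ 2 * Z ω ^ 2 - 2 * c * v * Z ω + v ^ 2 := fun ω => by
    ring
  have hint : Integrable (fun ω => c ^ 2 * Z ω ^ 2 - 2 * c * v * Z ω) P :=
    (hZ.integrable_sq.const_mul _).sub (hZ1.const_mul _)
  simp only [hexp]
  rw [integral_add hint (integrable_const _), integral_sub (hZ.integrable_sq.const_mul _)
    (hZ1.const_mul _), integral_const_mul, integral_const_mul, hv, variance_eq_sub hZ]
  simp only [Pi.pow_apply, hv, integral_const, probReal_univ, smul_eq_mul, one_mul]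
  ring

lemma ProbabilityTheory.integral_sum_sq_of_iIndepFun [IsProbabilityMeasure P] {ι : Type*}
    {Z : ι → Ω → ℝ} (hZ : iIndepFun Z P) (hL2 : ∀ i, MemLp (Z i) 2 P) (s : Finset ι) :
    ∫ ω, (∑ i ∈ s, Z i ω) ^ 2 ∂P =
      ∑ i ∈ s, variance (Z i) P + (∑ i ∈ s, ∫ ω, Z i ω ∂P) ^ 2 := by
  have hvar := IndepFun.variance_sum (s := s) (fun i _ => hL2 i)
    fun i _ j _ hij => hZ.indepFun hij
  rw [variance_eq_sub (memLp_finsetSum' s fun i _ => hL2 i)] at hvar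
  simp only [Pi.pow_apply, Finset.sum_apply] at hvar
  rw [← hvar, integral_finsetSum s fun i _ => (hL2 i).integrable one_le_two]
  ring

namespace ProbabilityTheory.IndepFun

variable {f g : Ω → ℝ}

lemma pow (hfg : IndepFun f g P) (a b : ℕ) :
    IndepFun (fun ω => f ω ^ a) (fun ω => g ω ^ b) P :=
  hfg.comp (measurable_id.pow_const a) (measurable_id.pow_const b)

lemma integral_pow_mul_pow (hfg : IndepFun f g P) (hf : AEStronglyMeasurable f P)
    (hg : AEStronglyMeasurable g P) (a b : ℕ) :
    ∫ ω, f ω ^ a * g ω ^ b ∂P = (∫ ω, f ω ^ a ∂P) * ∫ ω, g ω ^ b ∂P :=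
  (hfg.pow a b).integral_fun_mul_eq_mul_integral (hf.pow a) (hg.pow b)

lemma integral_pow_mul_add_pow [IsFiniteMeasure P] (hfg : IndepFun f g P) {c m : ℕ}
    (hf : MemLp f (c + m : ℕ) P) (hg : MemLp g m P) :
    ∫ ω, f ω ^ c * (f ω + g ω) ^ m ∂P =
      ∑ k ∈ range (m + 1), (∫ ω, f ω ^ (c + k) ∂P) * (∫ ω, g ω ^ (m - k) ∂P) * m.choose k := by
  have hterm : ∀ k ∈ range (m + 1),
      Integrable (fun ω => f ω ^ (c + k) * g ω ^ (m - k) * m.choose k) P := fun k hk =>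
    ((hfg.pow _ _).integrable_mul (hf.integrable_pow_of_le (by simp at hk; omega))
      (hg.integrable_pow_of_le (Nat.sub_le m k))).mul_const _
  simp_rw [add_pow, mul_sum, ← mul_assoc, ← pow_add]
  rw [integral_finsetSum _ hterm]
  refine sum_congr rfl fun k _ => ?_
  rw [integral_mul_const, hfg.integral_pow_mul_pow hf.1 hg.1]

end ProbabilityTheory.IndepFun

section SampleVariance

variable {ι : Type*} [Fintype ι]

noncomputable def sampleVariance (x : ι → ℝ) : ℝ :=
  (∑ i, (x i - (∑ j, x j) / Fintype.card ι) ^ 2) / (Fintype.card ι - 1)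

lemma sampleVariance_eq_sub_const (x : ι → ℝ) (c : ℝ) :
    sampleVariance x =
      (∑ i, (x i - c) ^ 2 - (∑ i, (x i - c)) ^ 2 / Fintype.card ι) / (Fintype.card ι - 1) := by
  rw [sampleVariance]
  congr 1
  rcases isEmpty_or_nonempty ι with hι | hι
  · simp
  have hN : (Fintype.card ι : ℝ) ≠ 0 := by positivity
  set S := ∑ i, (x i - c)
  have hmean : (∑ j, x j) / Fintype.card ι = c + S / Fintype.card ι := by
    simp only [S, sum_sub_distrib, sum_const, card_univ, nsmul_eq_mul]
    field_simp
    ring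
  calc ∑ i, (x i - (∑ j, x j) / Fintype.card ι) ^ 2
      = ∑ i, ((x i - c) ^ 2 - 2 * (S / Fintype.card ι) * (x i - c)
          + (S / Fintype.card ι) ^ 2) := by
        refine sum_congr rfl fun i _ => ?_
        rw [hmean]
        ring
    _ = ∑ i, (x i - c) ^ 2 - 2 * (S / Fintype.card ι) * S
          + Fintype.card ι * (S / Fintype.card ι) ^ 2 := by
        rw [sum_add_distrib, sum_sub_distrib, ← mul_sum, sum_const, card_univ, nsmul_eq_mul]
    _ = ∑ i, (x i - c) ^ 2 - S ^ 2 / Fintype.card ι := by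
        field_simp
        ring

lemma sampleVariance_eq (x : ι → ℝ) :
    sampleVariance x =
      (∑ i, x i ^ 2 - (∑ i, x i) ^ 2 / Fintype.card ι) / (Fintype.card ι - 1) := by
  simpa using sampleVariance_eq_sub_const x 0

lemma sampleVariance_sub_const (x : ι → ℝ) (c : ℝ) :
    sampleVariance (fun i => x i - c) = sampleVariance x := by
  rw [sampleVariance_eq_sub_const x c, sampleVariance_eq]

end SampleVariance

structure IsCenteredIndep {ι : Type*} (Y : ι → Ω → ℝ) (P : Measure Ω) (σ2 μ4 : ℝ) : Prop where
  measurable : ∀ i, Measurable (Y i)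
  indep : iIndepFun Y P
  memLp : ∀ i, MemLp (Y i) 4 P
  integral_eq_zero : ∀ i, ∫ ω, Y i ω ∂P = 0
  integral_sq : ∀ i, ∫ ω, Y i ω ^ 2 ∂P = σ2
  integral_pow_four : ∀ i, ∫ ω, Y i ω ^ 4 ∂P = μ4

lemma isCenteredIndep_of_identDistrib [IsProbabilityMeasure P] {ι : Type*} {X : ι → Ω → ℝ}
    (hmeas : ∀ i, Measurable (X i)) (hindep : iIndepFun X P) {i₀ : ι}
    (hident : ∀ i, IdentDistrib (X i) (X i₀) P P) {μ : ℝ} (hμ : μ = ∫ ω, X i₀ ω ∂P)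
    (hint : Integrable (fun ω => (X i₀ ω - μ) ^ 4) P) :
    IsCenteredIndep (fun i ω => X i ω - μ) P (∫ ω, (X i₀ ω - μ) ^ 2 ∂P)
      (∫ ω, (X i₀ ω - μ) ^ 4 ∂P) := by
  have hident' : ∀ (k : ℕ) i,
      IdentDistrib (fun ω => (X i ω - μ) ^ k) (fun ω => (X i₀ ω - μ) ^ k) P P := fun k i =>
    (hident i).comp ((measurable_id.sub_const μ).pow_const k)
  have hL4 : MemLp (fun ω => X i₀ ω - μ) 4 P := by
    rw [← integrable_norm_rpow_iff ((hmeas i₀).sub_const μ).aestronglyMeasurable (by norm_num)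
      (by norm_num)]
    refine hint.congr (ae_of_all _ fun ω => ?_)
    simp [(by decide : Even 4).pow_abs]
  refine ⟨fun i => (hmeas i).sub_const μ,
    hindep.comp (fun _ x => x - μ) fun _ => measurable_id.sub_const μ,
    fun i => ((hident i).comp (measurable_id.sub_const μ)).memLp_iff.2 hL4, fun i => ?_,
    fun i => (hident' 2 i).integral_eq, fun i => (hident' 4 i).integral_eq⟩
  have hX : Integrable (X i₀) P :=
    ((hL4.integrable (by norm_num)).add (integrable_const μ)).congr (ae_of_all _ fun ω => by simp)
  simpa [integral_sub hX (integrable_const μ), ← hμ] using (hident' 1 i).integral_eq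

namespace IsCenteredIndep

variable {ι : Type*} {Y : ι → Ω → ℝ} {σ2 μ4 : ℝ}

lemma memLp_two [IsProbabilityMeasure P] (hY : IsCenteredIndep Y P σ2 μ4) (i : ι) :
    MemLp (Y i) 2 P :=
  (hY.memLp i).mono_exponent (by norm_num)

lemma memLp_sum (hY : IsCenteredIndep Y P σ2 μ4) (s : Finset ι) :
    MemLp (fun ω => ∑ i ∈ s, Y i ω) 4 P :=
  memLp_finsetSum s fun i _ => hY.memLp i

lemma indepFun_sum (hY : IsCenteredIndep Y P σ2 μ4) {s : Finset ι} {a : ι} (ha : a ∉ s) :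
    IndepFun (Y a) (fun ω => ∑ i ∈ s, Y i ω) P := by
  simpa only [Finset.sum_fn] using (hY.indep.indepFun_finsetSum_of_notMem hY.measurable ha).symm

lemma variance_eq (hY : IsCenteredIndep Y P σ2 μ4) (i : ι) : variance (Y i) P = σ2 := by
  rw [variance_of_integral_eq_zero (hY.measurable i).aemeasurable (hY.integral_eq_zero i),
    hY.integral_sq i]

lemma variance_sq [IsProbabilityMeasure P] (hY : IsCenteredIndep Y P σ2 μ4) (i : ι) :
    variance (fun ω => Y i ω ^ 2) P = μ4 - σ2 ^ 2 := by
  rw [variance_eq_sub (hY.memLp i).sq_of_four]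
  simp only [Pi.pow_apply, ← pow_mul, hY.integral_pow_four, hY.integral_sq]

lemma neg_two_le_kurtosis [IsProbabilityMeasure P] (hY : IsCenteredIndep Y P σ2 μ4) (i : ι)
    (hσ : 0 < σ2) : -2 ≤ μ4 / σ2 ^ 2 - 3 := by
  have := sub_nonneg.1 (hY.variance_sq i ▸ variance_nonneg _ _)
  rw [le_sub_iff_add_le, le_div_iff₀ (by positivity)]
  linarith

lemma integral_sum [IsProbabilityMeasure P] (hY : IsCenteredIndep Y P σ2 μ4) (s : Finset ι) :
    ∫ ω, ∑ i ∈ s, Y i ω ∂P = 0 := by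
  rw [integral_finsetSum s fun i _ => (hY.memLp i).integrable (by norm_num)]
  simp [hY.integral_eq_zero]

lemma integral_sum_sq [IsProbabilityMeasure P] (hY : IsCenteredIndep Y P σ2 μ4) (s : Finset ι) :
    ∫ ω, (∑ i ∈ s, Y i ω) ^ 2 ∂P = #s * σ2 := by
  simp [integral_sum_sq_of_iIndepFun hY.indep hY.memLp_two, hY.variance_eq,
    hY.integral_eq_zero]

lemma integral_sum_pow_four [IsProbabilityMeasure P] (hY : IsCenteredIndep Y P σ2 μ4)
    (s : Finset ι) :
    ∫ ω, (∑ i ∈ s, Y i ω) ^ 4 ∂P = #s * μ4 + 3 * #s * (#s - 1) * σ2 ^ 2 := by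
  classical
  induction s using Finset.induction_on with
  | empty => simp
  | @insert a s ha ih =>
    have hsplit := (hY.indepFun_sum ha).integral_pow_mul_add_pow (c := 0) (hY.memLp a)
      (hY.memLp_sum s)
    simp only [pow_zero, one_mul, zero_add] at hsplit
    -- the third moments only occur multiplied by the mean of an independent centred factor
    simp only [sum_insert ha, hsplit, sum_range_succ, sum_range_zero, Nat.reduceAdd,
      Nat.reduceSub, pow_zero, pow_one, integral_const, probReal_univ, smul_eq_mul,
      hY.integral_eq_zero, hY.integral_sq, hY.integral_pow_four, hY.integral_sum_sq,
      hY.integral_sum, ih, card_insert_of_notMem ha]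
    norm_num [Nat.choose]
    ring

variable [Fintype ι]

lemma integral_sum_sq_sq [IsProbabilityMeasure P] (hY : IsCenteredIndep Y P σ2 μ4) :
    ∫ ω, (∑ i, Y i ω ^ 2) ^ 2 ∂P =
      Fintype.card ι * (μ4 - σ2 ^ 2) + (Fintype.card ι * σ2) ^ 2 := by
  have hindep : iIndepFun (fun i ω => Y i ω ^ 2) P :=
    hY.indep.comp (fun _ x => x ^ 2) fun _ => measurable_id.pow_const 2
  rw [integral_sum_sq_of_iIndepFun hindep fun i => (hY.memLp i).sq_of_four]
  simp only [hY.variance_sq, hY.integral_sq, sum_const, card_univ, nsmul_eq_mul]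

lemma integral_sq_mul_sum_sq [IsProbabilityMeasure P] [DecidableEq ι]
    (hY : IsCenteredIndep Y P σ2 μ4) (i : ι) :
    ∫ ω, Y i ω ^ 2 * (∑ j, Y j ω) ^ 2 ∂P = μ4 + (Fintype.card ι - 1) * σ2 ^ 2 := by
  have hsplit := (hY.indepFun_sum (notMem_erase i univ)).integral_pow_mul_add_pow (c := 2)
    (m := 2) (hY.memLp i) ((hY.memLp_sum _).mono_exponent (by norm_num))
  have hsum : ∀ ω, ∑ j, Y j ω = Y i ω + ∑ j ∈ univ.erase i, Y j ω := fun ω =>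
    (add_sum_erase _ _ (mem_univ i)).symm
  simp only [hsum, hsplit, sum_range_succ, sum_range_zero, Nat.reduceAdd, Nat.reduceSub,
    pow_zero, pow_one, integral_const, probReal_univ, smul_eq_mul, hY.integral_sq,
    hY.integral_pow_four, hY.integral_sum_sq, hY.integral_sum, card_erase_of_mem (mem_univ i),
    card_univ, Nat.cast_pred (Fintype.card_pos_iff.2 ⟨i⟩)]
  norm_num [Nat.choose]
  ring

lemma integral_sum_sq_mul_sum_sq [IsProbabilityMeasure P] (hY : IsCenteredIndep Y P σ2 μ4) :
    ∫ ω, (∑ i, Y i ω ^ 2) * (∑ i, Y i ω) ^ 2 ∂P =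
      Fintype.card ι * (μ4 + (Fintype.card ι - 1) * σ2 ^ 2) := by
  classical
  have hint : ∀ i, Integrable (fun ω => Y i ω ^ 2 * (∑ j, Y j ω) ^ 2) P := fun i =>
    (hY.memLp i).sq_of_four.integrable_mul (hY.memLp_sum univ).sq_of_four
  simp_rw [sum_mul]
  rw [integral_finsetSum _ fun i _ => hint i]
  simp only [hY.integral_sq_mul_sum_sq, sum_const, card_univ, nsmul_eq_mul]

lemma memLp_sampleVariance [IsProbabilityMeasure P] (hY : IsCenteredIndep Y P σ2 μ4) :
    MemLp (fun ω => sampleVariance (Y · ω)) 2 P := by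
  simp_rw [sampleVariance_eq, div_eq_mul_inv]
  exact ((memLp_finsetSum univ fun i _ => (hY.memLp i).sq_of_four).sub
    ((hY.memLp_sum univ).sq_of_four.mul_const _)).mul_const _

lemma integral_sampleVariance [IsProbabilityMeasure P] (hY : IsCenteredIndep Y P σ2 μ4)
    (hN : 1 < Fintype.card ι) : ∫ ω, sampleVariance (Y · ω) ∂P = σ2 := by
  have hN1 : (Fintype.card ι : ℝ) - 1 ≠ 0 := sub_ne_zero.2 (by exact_mod_cast hN.ne')
  have hN0 : (Fintype.card ι : ℝ) ≠ 0 := by positivity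
  have hT : Integrable (fun ω => ∑ i, Y i ω ^ 2) P :=
    (memLp_finsetSum univ fun i _ => (hY.memLp i).sq_of_four).integrable one_le_two
  have hS : Integrable (fun ω => (∑ i, Y i ω) ^ 2 / Fintype.card ι) P :=
    ((hY.memLp_sum univ).sq_of_four.integrable one_le_two).div_const _
  simp_rw [sampleVariance_eq]
  rw [integral_div, integral_sub hT hS,
    integral_finsetSum _ fun i _ => (hY.memLp i).sq_of_four.integrable one_le_two, integral_div,
    hY.integral_sum_sq]
  simp only [hY.integral_sq, sum_const, card_univ, nsmul_eq_mul]
  field_simp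

lemma variance_sampleVariance [IsProbabilityMeasure P] (hY : IsCenteredIndep Y P σ2 μ4)
    (hN : 1 < Fintype.card ι) :
    variance (fun ω => sampleVariance (Y · ω)) P =
      μ4 / Fintype.card ι -
        (Fintype.card ι - 3) / (Fintype.card ι * (Fintype.card ι - 1)) * σ2 ^ 2 := by
  have hN1 : (Fintype.card ι : ℝ) - 1 ≠ 0 := sub_ne_zero.2 (by exact_mod_cast hN.ne')
  have hN0 : (Fintype.card ι : ℝ) ≠ 0 := by positivity
  set T := fun ω => ∑ i, Y i ω ^ 2 with hTdef
  set S := fun ω => ∑ i, Y i ω with hSdef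
  have hT : MemLp T 2 P := memLp_finsetSum univ fun i _ => (hY.memLp i).sq_of_four
  have hTT : Integrable (fun ω => T ω ^ 2) P := hT.integrable_sq
  have hTS : Integrable (fun ω => 2 / Fintype.card ι * (T ω * S ω ^ 2)) P :=
    (hT.integrable_mul (hY.memLp_sum univ).sq_of_four).const_mul _
  have hSS : Integrable (fun ω => S ω ^ 4 / Fintype.card ι ^ 2) P :=
    ((hY.memLp_sum univ).integrable_pow_of_le (p := 4) le_rfl).div_const _
  have hTTS : Integrable (fun ω => T ω ^ 2 - 2 / Fintype.card ι * (T ω * S ω ^ 2)) P :=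
    hTT.sub hTS
  have hsq : ∀ ω, sampleVariance (Y · ω) ^ 2 =
      (T ω ^ 2 - 2 / Fintype.card ι * (T ω * S ω ^ 2) + S ω ^ 4 / Fintype.card ι ^ 2) /
        (Fintype.card ι - 1) ^ 2 := fun ω => by
    simp only [sampleVariance_eq, hTdef, hSdef, div_pow]
    ring
  rw [variance_eq_sub hY.memLp_sampleVariance]
  simp only [Pi.pow_apply, hsq]
  rw [hY.integral_sampleVariance hN, integral_div, integral_add hTTS hSS,
    integral_sub hTT hTS, integral_const_mul, integral_div, hY.integral_sum_sq_sq,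
    hY.integral_sum_sq_mul_sum_sq, hY.integral_sum_pow_four]
  simp only [card_univ]
  field_simp
  ring

end IsCenteredIndep

end Moments

lemma div_add_two_div_sub_one_pos {N κ : ℝ} (hN : 2 ≤ N) (hκ : -2 ≤ κ) :
    0 < κ / N + 2 / (N - 1) := by
  rw [div_add_div _ _ (by positivity) (by linarith)]
  exact div_pos (by nlinarith) (by nlinarith)

/-- **Relative efficiency of the MSE-best biased variance estimator.**
Under the setting of Proposition 2, with `κ = μ₄/σ⁴ - 3`,
`s² = (1/(n-1)) ∑ (X i - X̄)²` and `c* = (κ/n + (n+1)/(n-1))⁻¹`, the relative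
efficiency satisfies
`E[(s² - σ²)²] / E[(c* s² - σ²)²] = 1 + κ/n + 2/(n-1)` and this quantity is
strictly greater than `1`. -/
theorem relative_efficiency_mbbe
    {Ω : Type*} [MeasurableSpace Ω] (P : Measure Ω) [IsProbabilityMeasure P]
    (n : ℕ) (hn : 2 ≤ n)
    (X : Fin n → Ω → ℝ) (hmeas : ∀ i, Measurable (X i))
    (hindep : iIndepFun X P)
    (hident : ∀ i, IdentDistrib (X i) (X ⟨0, by omega⟩) P P)
    (μ σ2 μ4 κ cstar : ℝ)
    (hμ : μ = ∫ ω, X ⟨0, by omega⟩ ω ∂P)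
    (hσ2 : σ2 = ∫ ω, (X ⟨0, by omega⟩ ω - μ) ^ 2 ∂P) (hσ2pos : 0 < σ2)
    (hμ4 : μ4 = ∫ ω, (X ⟨0, by omega⟩ ω - μ) ^ 4 ∂P)
    (hint4 : Integrable (fun ω => (X ⟨0, by omega⟩ ω - μ) ^ 4) P)
    (hκ : κ = μ4 / σ2 ^ 2 - 3)
    (hcstar : cstar = (κ / n + ((n : ℝ) + 1) / ((n : ℝ) - 1))⁻¹)
    (Xbar s2 : Ω → ℝ)
    (hXbar : ∀ ω, Xbar ω = (1 / n : ℝ) * ∑ i, X i ω)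
    (hs2 : ∀ ω, s2 ω = (1 / ((n : ℝ) - 1)) * ∑ i, (X i ω - Xbar ω) ^ 2) :
    (∫ ω, (s2 ω - σ2) ^ 2 ∂P) / (∫ ω, (cstar * s2 ω - σ2) ^ 2 ∂P) =
        1 + κ / n + 2 / ((n : ℝ) - 1) ∧
      1 < 1 + κ / n + 2 / ((n : ℝ) - 1) := by
  have hY := isCenteredIndep_of_identDistrib hmeas hindep hident hμ hint4
  rw [← hσ2, ← hμ4] at hY
  have hcard : 1 < Fintype.card (Fin n) := by rw [Fintype.card_fin]; omega
  have hs2' : s2 = fun ω => sampleVariance (fun i => X i ω - μ) := funext fun ω => by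
    rw [sampleVariance_sub_const, hs2, sampleVariance]
    simp [hXbar, div_eq_inv_mul]
  have hN1 : (n : ℝ) - 1 ≠ 0 := sub_ne_zero.2 (by exact_mod_cast (by omega : n ≠ 1))
  rw [add_assoc]
  set a := κ / n + 2 / ((n : ℝ) - 1) with ha_def
  have ha : 0 < a := div_add_two_div_sub_one_pos (by exact_mod_cast hn)
    (hκ ▸ hY.neg_two_le_kurtosis ⟨0, by omega⟩ hσ2pos)
  have hvar : variance s2 P = σ2 ^ 2 * a := by
    rw [hs2', hY.variance_sampleVariance hcard, ha_def, hκ, Fintype.card_fin]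
    field_simp
    ring
  have hmse := integral_const_mul_sub_sq (hs2' ▸ hY.memLp_sampleVariance)
    (hs2' ▸ hY.integral_sampleVariance hcard)
  have hc : cstar = (1 + a)⁻¹ := by
    rw [hcstar, ha_def]
    field_simp
    ring
  have hmse_one : ∫ ω, (s2 ω - σ2) ^ 2 ∂P = variance s2 P := by simpa using hmse 1
  refine ⟨?_, by linarith⟩
  rw [hmse_one, hmse, hvar, hc]
  field_simp
  ring
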